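/- Let μ_k be the uniform distribution on S_k and π_k the distribution on ℕ of the tree realization number R under μ_k. Then for k > 1 and every c ∈ ℕ, π_k(c) = ∑_{a·b = c, 1 ≤ a ≤ k} (1/k) · π_{k-1}(b); that is, π_k is the Dirichlet convolution of the uniform distribution U_k on {1,...,k} with π_{k-1}. -/

import Mathlib

/-!
Deleting the last value `v = σ(n+1)` of `σ ∈ S_{n+1}` and standardising the remaining values
gives a bijection `S_{n+1} ≃ Fin (n+1) × S_n`. Standardising keeps the relative order of the
other entries, so `l_i` is unchanged for `i ≤ n`, while `l_{n+1} = n + 1 - v`. Hence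
`R(σ) = (n + 1 - v) · R(τ)`: under the uniform measure, `R` on `S_{n+1}` is the product of two
independent variables with laws `U_{n+1}` and `π_n`, and the law of a product of independent
positive integers is the Dirichlet convolution of their laws.
-/

open Finset

/-- The `i`-th entry of the left inversion vector: `l_i(σ) = #{j ≤ i : σ(j) ≥ σ(i)}`. -/
def linv (σ : Equiv.Perm (Fin n)) (i : Fin n) : ℕ :=
  (Finset.univ.filter (fun j : Fin n => j ≤ i ∧ σ i ≤ σ j)).card

/-- The tree realization number `R(σ) = ∏ᵢ l_i(σ)`. -/
def TRN (σ : Equiv.Perm (Fin n)) : ℕ := ∏ i, linv σ i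

/-- `π_k(c)`: the probability that the tree realization number equals `c` under
the uniform distribution on `S_k`. -/
noncomputable def pid (k : ℕ) (c : ℕ) : ℚ :=
  ((Finset.univ.filter (fun σ : Equiv.Perm (Fin k) => TRN σ = c)).card : ℚ) /
    (Nat.factorial k : ℚ)

/-- The uniform distribution `U_k` on `{1,…,k}`. -/
def unif (k : ℕ) (a : ℕ) : ℚ := if 1 ≤ a ∧ a ≤ k then 1 / k else 0

theorem Finset.card_filter_mul_eq_sum_divisorsAntidiagonal {α β : Type*} {c : ℕ} (hc : c ≠ 0)
    (s : Finset α) (t : Finset β) (f : α → ℕ) (g : β → ℕ) :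
    #{x ∈ s ×ˢ t | f x.1 * g x.2 = c} =
      ∑ p ∈ c.divisorsAntidiagonal, #{a ∈ s | f a = p.1} * #{b ∈ t | g b = p.2} := by
  rw [card_eq_sum_card_fiberwise (f := fun x => (f x.1, g x.2)) (t := c.divisorsAntidiagonal)]
  · refine sum_congr rfl fun p hp => ?_
    rw [Nat.mem_divisorsAntidiagonal] at hp
    rw [filter_filter, ← card_product, ← filter_product]
    congr 1
    refine filter_congr fun x _ => ?_
    rw [Prod.ext_iff]
    constructor
    · exact fun h => h.2
    · rintro ⟨h₁, h₂⟩
      exact ⟨by rw [h₁, h₂, hp.1], h₁, h₂⟩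
  · intro x hx
    rw [coe_filter] at hx
    exact Nat.mem_divisorsAntidiagonal.mpr ⟨hx.2, hc⟩

namespace Equiv.Perm

def insertLast {n : ℕ} (v : Fin (n + 1)) (τ : Perm (Fin n)) : Perm (Fin (n + 1)) :=
  (finSuccEquiv' (Fin.last n)).trans ((optionCongr τ).trans (finSuccEquiv' v).symm)

variable {n : ℕ}

@[simp] lemma insertLast_last (v : Fin (n + 1)) (τ : Perm (Fin n)) :
    insertLast v τ (Fin.last n) = v := by
  simp [insertLast]

@[simp] lemma insertLast_castSucc (v : Fin (n + 1)) (τ : Perm (Fin n)) (j : Fin n) :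
    insertLast v τ j.castSucc = v.succAbove (τ j) := by
  simp [insertLast, ← Fin.succAbove_last]

lemma insertLast_injective :
    Function.Injective fun x : Fin (n + 1) × Perm (Fin n) => insertLast x.1 x.2 := by
  rintro ⟨v, τ⟩ ⟨v', τ'⟩ h
  obtain rfl : v = v' := by simpa using congr($h (Fin.last n))
  refine Prod.ext rfl (Equiv.ext fun j => Fin.succAbove_right_injective (p := v) ?_)
  simpa using congr($h j.castSucc)

noncomputable def insertLastEquiv : Fin (n + 1) × Perm (Fin n) ≃ Perm (Fin (n + 1)) :=
  Equiv.ofBijective _ <| (Fintype.bijective_iff_injective_and_card _).mpr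
    ⟨insertLast_injective, by simp [Fintype.card_perm, Nat.factorial_succ]⟩

end Equiv.Perm

open Equiv.Perm

section

variable {n : ℕ}

lemma linv_pos (σ : Equiv.Perm (Fin n)) (i : Fin n) : 0 < linv σ i :=
  card_pos.mpr ⟨i, by simp⟩

lemma TRN_pos (σ : Equiv.Perm (Fin n)) : 0 < TRN σ :=
  prod_pos fun i _ => linv_pos σ i

lemma linv_last (σ : Equiv.Perm (Fin (n + 1))) :
    linv σ (Fin.last n) = n + 1 - σ (Fin.last n) := by
  rw [linv, ← Fin.card_Ici]
  exact card_equiv σ fun j => by simp [Fin.le_last]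

lemma linv_insertLast_castSucc (v : Fin (n + 1)) (τ : Equiv.Perm (Fin n)) (i : Fin n) :
    linv (insertLast v τ) i.castSucc = linv τ i := by
  simp only [linv, card_filter, Fin.sum_univ_castSucc, insertLast_castSucc,
    Fin.castSucc_le_castSucc_iff, Fin.succAbove_le_succAbove_iff]
  simp [(Fin.castSucc_lt_last i).not_ge]

lemma TRN_insertLast (v : Fin (n + 1)) (τ : Equiv.Perm (Fin n)) :
    TRN (insertLast v τ) = (n + 1 - v) * TRN τ := by
  rw [TRN, Fin.prod_univ_castSucc, linv_last, insertLast_last, mul_comm]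
  simp only [linv_insertLast_castSucc, TRN]

lemma card_TRN_eq_succ (c : ℕ) :
    #{σ : Equiv.Perm (Fin (n + 1)) | TRN σ = c} =
      #{x : Fin (n + 1) × Equiv.Perm (Fin n) | (n + 1 - x.1) * TRN x.2 = c} :=
  (card_equiv insertLastEquiv fun x => by simp [insertLastEquiv, TRN_insertLast]).symm

end

lemma Fin.card_filter_sub_val_eq (n a : ℕ) :
    #{v : Fin (n + 1) | n + 1 - v = a} = if 1 ≤ a ∧ a ≤ n + 1 then 1 else 0 := by
  split_ifs with ha
  · rw [card_eq_one]
    exact ⟨⟨n + 1 - a, by omega⟩, by ext v; simp [Fin.ext_iff]; omega⟩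
  · rw [card_eq_zero, filter_eq_empty_iff]
    intro v _
    omega

theorem pid_succ (n c : ℕ) :
    pid (n + 1) c = ∑ p ∈ c.divisorsAntidiagonal, unif (n + 1) p.1 * pid n p.2 := by
  rcases eq_or_ne c 0 with rfl | hc
  · simp [pid, (TRN_pos _).ne']
  rw [pid, card_TRN_eq_succ, ← univ_product_univ,
    card_filter_mul_eq_sum_divisorsAntidiagonal hc _ _ (fun v : Fin (n + 1) => n + 1 - v) TRN,
    Nat.cast_sum, sum_div]
  refine sum_congr rfl fun p _ => ?_
  rw [Fin.card_filter_sub_val_eq, unif, pid, Nat.factorial_succ]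
  split_ifs
  · push_cast
    field_simp
  · simp

/-- For `k > 1`, `π_k = U_k * π_{k-1}` (Dirichlet convolution):
`π_k(c) = ∑_{ab=c} U_k(a) π_{k-1}(b)`. -/
theorem stmt_17 (k : ℕ) (hk : 1 < k) (c : ℕ) :
    pid k c = ∑ p ∈ Nat.divisorsAntidiagonal c, unif k p.1 * pid (k - 1) p.2 := by
  obtain ⟨n, rfl⟩ : ∃ n, k = n + 1 := ⟨k - 1, by omega⟩
  exact pid_succ n c
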